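/- arXiv:1708.06974 — 3 statements merged into one kernel-verified Lean document; each statement's English description precedes it below -/
import Mathlib

section
/- For integers 0 ≤ i, i' ≤ q − 1 and 1 ≤ j, j' ≤ q − 1 with (i, j) ≠ (i', j'), the sets S_{i,j} and S_{i',j'} are disjoint. -/
/-- The set `S_{i,j}`. -/
def gkSij (q i j : ℤ) : Set ℤ :=
  {x : ℤ | ∃ k₁ k₂ : ℤ, 0 ≤ k₁ ∧ k₁ ≤ q - 1 ∧ 0 ≤ k₂ ∧ k₂ ≤ q ^ 3 - q - j * q ^ 2 + i ∧
    x = (i * q - j * q ^ 2 + k₁) * (q ^ 3 - q + 1) + (j * q ^ 2 - i + k₂) * (q ^ 3 + 1)}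

/-!
Write `A = q^3 - q + 1` and `B = q^3 + 1`, so every element of `S_{i,j}` has the form `u A + v B`
with `u = iq - jq^2 + k₁`. Since `A` and `B` are coprime, `u` is determined by the element modulo `B`.
Now `u + q^3 = k₁ + q (i + q (q - j))` has base-`q` digits `k₁, i, q - j`, so it lies in `[0, q^3)`,
a window shorter than `B`; hence the element determines `u`, and the digits of `u + q^3`
determine `(i, j)`.
-/

open Set

theorem isCoprime_cube_sub_add_one_cube_add_one (q : ℤ) : IsCoprime (q ^ 3 - q + 1) (q ^ 3 + 1) :=
  ⟨q ^ 2, -(q ^ 2 - 1), by ring⟩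

theorem Int.eq_of_mul_add_mul_eq_of_abs_sub_lt {A B u v u' v' : ℤ} (hAB : IsCoprime A B)
    (h : u * A + v * B = u' * A + v' * B) (hu : |u - u'| < B) : u = u' := by
  have hdvd : B ∣ (u - u') * A := ⟨v' - v, by linear_combination h⟩
  exact sub_eq_zero.mp (Int.eq_zero_of_abs_lt_dvd (hAB.symm.dvd_of_dvd_mul_right hdvd) hu)

theorem Int.add_mul_mem_Ico {q n a b : ℤ} (ha : a ∈ Ico 0 q) (hb : b ∈ Ico 0 n) :
    a + q * b ∈ Ico 0 (q * n) := by
  obtain ⟨ha0, haq⟩ := ha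
  obtain ⟨hb0, hbn⟩ := hb
  constructor <;> nlinarith

theorem Int.add_mul_add_mul_mem_Ico_pow_three {q a b c : ℤ} (ha : a ∈ Ico 0 q)
    (hb : b ∈ Ico 0 q) (hc : c ∈ Ico 0 q) : a + q * (b + q * c) ∈ Ico 0 (q ^ 3) := by
  simpa only [pow_three] using Int.add_mul_mem_Ico ha (Int.add_mul_mem_Ico hb hc)

theorem Int.eq_and_eq_of_add_mul_eq {q a b a' b' : ℤ} (ha : a ∈ Ico 0 q) (ha' : a' ∈ Ico 0 q)
    (h : a + q * b = a' + q * b') : a = a' ∧ b = b' := by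
  have hmod : ∀ {c d : ℤ}, c ∈ Ico 0 q → (c + q * d) % q = c := fun hc => by
    rw [Int.add_mul_emod_self_left, Int.emod_eq_of_lt hc.1 hc.2]
  have haa' : a = a' := by rw [← hmod (d := b) ha, ← hmod (d := b') ha', h]
  subst haa'
  have hq : q ≠ 0 := (ha.1.trans_lt ha.2).ne'
  exact ⟨rfl, mul_left_cancel₀ hq (add_left_cancel h)⟩

theorem gk_Sij_disjoint_general (q : ℤ) (i j i' j' : ℤ)
    (hi0 : 0 ≤ i) (hi1 : i ≤ q - 1) (hj0 : 1 ≤ j) (hj1 : j ≤ q - 1)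
    (hi'0 : 0 ≤ i') (hi'1 : i' ≤ q - 1) (hj'0 : 1 ≤ j') (hj'1 : j' ≤ q - 1)
    (hne : (i, j) ≠ (i', j')) :
    gkSij q i j ∩ gkSij q i' j' = ∅ := by
  rw [Set.eq_empty_iff_forall_notMem]
  rintro x ⟨⟨k₁, k₂, hk₁0, hk₁1, -, -, rfl⟩, ⟨k₁', k₂', hk₁'0, hk₁'1, -, -, hx⟩⟩
  have hmem := Int.add_mul_add_mul_mem_Ico_pow_three (q := q) (a := k₁) (b := i) (c := q - j)
    ⟨hk₁0, by omega⟩ ⟨hi0, by omega⟩ ⟨by omega, by omega⟩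
  have hmem' := Int.add_mul_add_mul_mem_Ico_pow_three (q := q) (a := k₁') (b := i') (c := q - j')
    ⟨hk₁'0, by omega⟩ ⟨hi'0, by omega⟩ ⟨by omega, by omega⟩
  have hu : i * q - j * q ^ 2 + k₁ = i' * q - j' * q ^ 2 + k₁' :=
    Int.eq_of_mul_add_mul_eq_of_abs_sub_lt (isCoprime_cube_sub_add_one_cube_add_one q) hx
      (abs_sub_lt_iff.mpr ⟨by linarith [hmem.1, hmem.2, hmem'.1, hmem'.2],
        by linarith [hmem.1, hmem.2, hmem'.1, hmem'.2]⟩)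
  obtain ⟨-, hij⟩ := Int.eq_and_eq_of_add_mul_eq (q := q) ⟨hk₁0, by omega⟩ ⟨hk₁'0, by omega⟩
    (b := i + q * (q - j)) (b' := i' + q * (q - j')) (by linear_combination hu)
  obtain ⟨hi, hj⟩ := Int.eq_and_eq_of_add_mul_eq (q := q) ⟨hi0, by omega⟩ ⟨hi'0, by omega⟩ hij
  exact hne (Prod.ext hi (by linarith))

/-- For `(i, j) ≠ (i', j')` in the given ranges, `S_{i,j}` and `S_{i',j'}` are disjoint. -/
theorem gk_Sij_disjoint (q : ℤ) (hq : IsPrimePow q) (i j i' j' : ℤ)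
    (hi0 : 0 ≤ i) (hi1 : i ≤ q - 1) (hj0 : 1 ≤ j) (hj1 : j ≤ q - 1)
    (hi'0 : 0 ≤ i') (hi'1 : i' ≤ q - 1) (hj'0 : 1 ≤ j') (hj'1 : j' ≤ q - 1)
    (hne : (i, j) ≠ (i', j')) :
    gkSij q i j ∩ gkSij q i' j' = ∅ :=
  gk_Sij_disjoint_general q i j i' j' hi0 hi1 hj0 hj1 hi'0 hi'1 hj'0 hj'1 hne
end

section
/- The numerical semigroup T equals the union of S with the sets S_{i,j}; that is, T = S ∪ (⋃_{0 ≤ i ≤ q−1, 1 ≤ j ≤ q−1} S_{i,j}) as subsets of ℕ. -/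
/-!
Write `a = q³ - q + 1`, `b = q³ + 1` and `δ = q⁴ - q³ - q² + q - 1`, so that the extra generators
of `T` are `q³ + iδ`. Every element of `T` is `C q³ + D δ + α a + β b` with `α, β ≥ 0` and
`0 ≤ D ≤ (q - 1) C`. The relations `q · q³ = a + (q - 1) b`, `q³ + q δ = (q² - q) b` and
`q a = δ + b` rewrite such a representation into one of the same shape with smaller weight
`α + D + (q + 2) C`, until either it is visibly in `S` or `1 ≤ C ≤ q - 1` and `D, α ≤ q - 1`;
then the element lies in `S_{D,C}`, or, when `β` is too large for that, again in `S`.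
Conversely `S_{i,j} = (j - 1) q³ + (q³ + i δ) + k₁ a + k₂ b` lies in `T`.
-/

/-- The numerical semigroup `S` generated by `q^3 - q + 1` and `q^3 + 1`. -/
def gkS (q : ℤ) : AddSubmonoid ℤ :=
  AddSubmonoid.closure {q ^ 3 - q + 1, q ^ 3 + 1}

/-- The numerical semigroup `T` generated by `q^3 - q + 1`, `q^3 + 1` and the numbers
`q^3 + i(q^4 - q^3 - q^2 + q - 1)` for `i = 0, …, q - 1`. -/
def gkT (q : ℤ) : AddSubmonoid ℤ :=
  AddSubmonoid.closure ({q ^ 3 - q + 1, q ^ 3 + 1} ∪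
    {x : ℤ | ∃ i : ℤ, 0 ≤ i ∧ i ≤ q - 1 ∧
      x = q ^ 3 + i * (q ^ 4 - q ^ 3 - q ^ 2 + q - 1)})

def gkUnion (q : ℤ) : Set ℤ :=
  (gkS q : Set ℤ) ∪ {x : ℤ | ∃ i j : ℤ, 0 ≤ i ∧ i ≤ q - 1 ∧ 1 ≤ j ∧ j ≤ q - 1 ∧ x ∈ gkSij q i j}

def gkCombo (q C D α β : ℤ) : ℤ :=
  C * q ^ 3 + D * (q ^ 4 - q ^ 3 - q ^ 2 + q - 1) + α * (q ^ 3 - q + 1) + β * (q ^ 3 + 1)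

lemma AddSubmonoid.int_mul_mem {M : AddSubmonoid ℤ} {c x : ℤ} (hc : 0 ≤ c) (hx : x ∈ M) :
    c * x ∈ M := by
  simpa [nsmul_eq_mul, Int.toNat_of_nonneg hc] using nsmul_mem hx c.toNat

section Generators

variable (q : ℤ)

lemma gkS_le_gkT : gkS q ≤ gkT q :=
  AddSubmonoid.closure_mono Set.subset_union_left

lemma left_gen_mem_gkS : q ^ 3 - q + 1 ∈ gkS q :=
  AddSubmonoid.subset_closure (Set.mem_insert _ _)

lemma right_gen_mem_gkS : q ^ 3 + 1 ∈ gkS q :=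
  AddSubmonoid.subset_closure (Set.mem_insert_of_mem _ rfl)

lemma extra_gen_mem_gkT {i : ℤ} (hi₀ : 0 ≤ i) (hi : i ≤ q - 1) :
    q ^ 3 + i * (q ^ 4 - q ^ 3 - q ^ 2 + q - 1) ∈ gkT q :=
  AddSubmonoid.subset_closure (Or.inr ⟨i, hi₀, hi, rfl⟩)

variable {q}

lemma combo_mem_gkS {α β : ℤ} (hα : 0 ≤ α) (hβ : 0 ≤ β) :
    α * (q ^ 3 - q + 1) + β * (q ^ 3 + 1) ∈ gkS q :=
  add_mem (AddSubmonoid.int_mul_mem hα (left_gen_mem_gkS q))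
    (AddSubmonoid.int_mul_mem hβ (right_gen_mem_gkS q))

lemma gkT_le_gkS_of_le_one (hq : q ≤ 1) : gkT q ≤ gkS q := by
  refine AddSubmonoid.closure_le.mpr (Set.union_subset AddSubmonoid.subset_closure ?_)
  rintro x ⟨i, hi₀, hi, rfl⟩
  obtain ⟨rfl, rfl⟩ : q = 1 ∧ i = 0 := by omega
  exact left_gen_mem_gkS 1

end Generators

lemma gkUnion_subset_gkT (q : ℤ) : gkUnion q ⊆ gkT q := by
  rintro x (hx | ⟨i, j, hi₀, hi, hj, -, k₁, k₂, hk₁, -, hk₂, -, rfl⟩)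
  · exact gkS_le_gkT q hx
  · have e : (i * q - j * q ^ 2 + k₁) * (q ^ 3 - q + 1) + (j * q ^ 2 - i + k₂) * (q ^ 3 + 1)
        = (j - 1) * q ^ 3 + (q ^ 3 + i * (q ^ 4 - q ^ 3 - q ^ 2 + q - 1))
          + (k₁ * (q ^ 3 - q + 1) + k₂ * (q ^ 3 + 1)) := by ring
    have hq3 : q ^ 3 ∈ gkT q := by simpa using extra_gen_mem_gkT q le_rfl (by omega)
    rw [e]
    exact add_mem (add_mem (AddSubmonoid.int_mul_mem (by omega) hq3)
      (extra_gen_mem_gkT q hi₀ hi)) (gkS_le_gkT q (combo_mem_gkS hk₁ hk₂))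

lemma exists_gkCombo_eq_of_mem_gkT {q x : ℤ} (hx : x ∈ gkT q) :
    ∃ C D α β : ℤ, 0 ≤ C ∧ 0 ≤ D ∧ D ≤ (q - 1) * C ∧ 0 ≤ α ∧ 0 ≤ β ∧
      x = gkCombo q C D α β := by
  induction hx using AddSubmonoid.closure_induction with
  | mem y hy =>
    rcases hy with (rfl | rfl) | ⟨i, hi₀, hi, rfl⟩
    · exact ⟨0, 0, 1, 0, le_rfl, le_rfl, by simp, zero_le_one, le_rfl, by simp [gkCombo]⟩
    · exact ⟨0, 0, 0, 1, le_rfl, le_rfl, by simp, le_rfl, zero_le_one, by simp [gkCombo]⟩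
    · exact ⟨1, i, 0, 0, zero_le_one, hi₀, by simpa using hi, le_rfl, le_rfl, by simp [gkCombo]⟩
  | zero => exact ⟨0, 0, 0, 0, le_rfl, le_rfl, by simp, le_rfl, le_rfl, by simp [gkCombo]⟩
  | add y z _ _ ihy ihz =>
    obtain ⟨C, D, α, β, hC, hD, hDC, hα, hβ, rfl⟩ := ihy
    obtain ⟨C', D', α', β', hC', hD', hDC', hα', hβ', rfl⟩ := ihz
    refine ⟨C + C', D + D', α + α', β + β', by omega, by omega, ?_, by omega, by omega, ?_⟩
    · rw [mul_add]; omega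
    · unfold gkCombo; ring

section Reduction

variable {q C D α β : ℤ}

lemma gkCombo_zero_mem_gkS (hα : 0 ≤ α) (hβ : 0 ≤ β) : gkCombo q 0 0 α β ∈ gkS q := by
  simpa [gkCombo] using combo_mem_gkS (q := q) hα hβ

lemma gkCombo_self_mem_gkS (hq : 0 ≤ q) (hD : 0 ≤ D) (hDq : D ≤ q - 1) (hα : 0 ≤ α)
    (hβ : 0 ≤ β) : gkCombo q q D α β ∈ gkS q := by
  -- `q · q³ = a + (q - 1) b` and `D δ = D q a - D b`
  have e : gkCombo q q D α β
      = (D * q + 1 + α) * (q ^ 3 - q + 1) + (q - 1 - D + β) * (q ^ 3 + 1) := by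
    unfold gkCombo; ring
  rw [e]
  exact combo_mem_gkS (by nlinarith) (by omega)

lemma gkCombo_mem_gkUnion_of_reduced (hq : 2 ≤ q) (hC : 1 ≤ C) (hCq : C ≤ q - 1) (hD : 0 ≤ D)
    (hDq : D ≤ q - 1) (hα : 0 ≤ α) (hαq : α ≤ q - 1) (hβ : 0 ≤ β) :
    gkCombo q C D α β ∈ gkUnion q := by
  by_cases hβb : β ≤ q ^ 3 - q - C * q ^ 2 + D
  · exact Or.inr ⟨D, C, hD, hDq, hC, hCq, α, β, hα, hαq, hβ, hβb, by unfold gkCombo; ring⟩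
  · -- trade `a` copies of `b` for `b` copies of `a`
    have e : gkCombo q C D α β
        = (D * q - C * q ^ 2 + α + (q ^ 3 + 1)) * (q ^ 3 - q + 1)
          + (C * q ^ 2 - D + β - (q ^ 3 - q + 1)) * (q ^ 3 + 1) := by
      unfold gkCombo; ring
    have hCq2 : C * q ^ 2 ≤ q ^ 3 - q ^ 2 := by nlinarith
    rw [e]
    exact Or.inl (combo_mem_gkS (by nlinarith) (by linarith))

lemma exists_lighter_gkCombo_eq (hq : 2 ≤ q) (hC : 0 ≤ C) (hD : 0 ≤ D)
    (hDC : D ≤ (q - 1) * C) (hα : 0 ≤ α) (hβ : 0 ≤ β) (hx : gkCombo q C D α β ∉ gkUnion q) :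
    ∃ C' D' α' β' : ℤ, 0 ≤ C' ∧ 0 ≤ D' ∧ D' ≤ (q - 1) * C' ∧ 0 ≤ α' ∧ 0 ≤ β' ∧
      α' + D' + (q + 2) * C' < α + D + (q + 2) * C ∧
      gkCombo q C' D' α' β' = gkCombo q C D α β := by
  obtain rfl | hC₁ := hC.eq_or_lt'
  · obtain rfl : D = 0 := by simp at hDC; omega
    exact absurd (Or.inl (gkCombo_zero_mem_gkS hα hβ)) hx
  -- `q³ + q δ = (q² - q) b`
  by_cases hDq : q ≤ D
  · exact ⟨C - 1, D - q, α, β + (q ^ 2 - q), by omega, by omega, by nlinarith, hα,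
      by nlinarith, by nlinarith, by unfold gkCombo; ring⟩
  -- `q · q³ = a + (q - 1) b`
  by_cases hCq : q + 1 ≤ C
  · exact ⟨C - q, D, α + 1, β + (q - 1), by omega, hD, by nlinarith, by omega, by omega,
      by nlinarith, by unfold gkCombo; ring⟩
  obtain rfl | hCq : C = q ∨ C ≤ q - 1 := by omega
  · exact absurd (Or.inl (gkCombo_self_mem_gkS (by omega) hD (by omega) hα hβ)) hx
  by_cases hαq : α ≤ q - 1
  · exact absurd (gkCombo_mem_gkUnion_of_reduced hq hC₁ hCq hD (by omega) hα hαq hβ) hx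
  -- `q a = δ + b`
  by_cases hD₂ : D ≤ q - 2
  · exact ⟨C, D + 1, α - q, β + 1, hC, by omega, by nlinarith, by omega, by omega, by omega,
      by unfold gkCombo; ring⟩
  -- `q³ + (q - 1) δ + q a = (q² - q + 1) b`
  obtain rfl : D = q - 1 := by omega
  exact ⟨C - 1, 0, α - q, β + (q ^ 2 - q + 1), by omega, le_rfl, by nlinarith, by omega,
    by nlinarith, by nlinarith, by unfold gkCombo; ring⟩

lemma gkCombo_mem_gkUnion (hq : 2 ≤ q) (hC : 0 ≤ C) (hD : 0 ≤ D) (hDC : D ≤ (q - 1) * C)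
    (hα : 0 ≤ α) (hβ : 0 ≤ β) : gkCombo q C D α β ∈ gkUnion q := by
  obtain ⟨n, hn⟩ : ∃ n : ℕ, α + D + (q + 2) * C < n :=
    ⟨(α + D + (q + 2) * C).toNat + 1, by omega⟩
  induction n generalizing C D α β with
  | zero => push_cast at hn; nlinarith
  | succ n ih =>
    by_contra hx
    obtain ⟨C', D', α', β', hC', hD', hDC', hα', hβ', hlt, e⟩ :=
      exists_lighter_gkCombo_eq hq hC hD hDC hα hβ hx
    exact hx (e ▸ ih hC' hD' hDC' hα' hβ' (by push_cast at hn; omega))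

end Reduction

theorem gk_T_eq_union_general (q : ℤ) :
    (gkT q : Set ℤ) = (gkS q : Set ℤ) ∪
      {x : ℤ | ∃ i j : ℤ, 0 ≤ i ∧ i ≤ q - 1 ∧ 1 ≤ j ∧ j ≤ q - 1 ∧ x ∈ gkSij q i j} := by
  refine Set.Subset.antisymm (fun x hx => ?_) (gkUnion_subset_gkT q)
  rcases le_or_gt q 1 with hq | hq
  · exact Or.inl (gkT_le_gkS_of_le_one hq hx)
  · obtain ⟨C, D, α, β, hC, hD, hDC, hα, hβ, rfl⟩ := exists_gkCombo_eq_of_mem_gkT hx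
    exact gkCombo_mem_gkUnion hq hC hD hDC hα hβ

/-- `T` is the union of `S` and the sets `S_{i,j}` for `0 ≤ i ≤ q-1`, `1 ≤ j ≤ q-1`. -/
theorem gk_T_eq_union (q : ℤ) (hq : IsPrimePow q) :
    (gkT q : Set ℤ) = (gkS q : Set ℤ) ∪
      {x : ℤ | ∃ i j : ℤ, 0 ≤ i ∧ i ≤ q - 1 ∧ 1 ≤ j ∧ j ≤ q - 1 ∧ x ∈ gkSij q i j} :=
  gk_T_eq_union_general q
end

section
/- The union G₁ ∪ G₂ ∪ G₃ is contained in G and has cardinality exactly (1/2)·q^2·(q−1)·(q^2 + q − 1) = (q^5 − 2q^3 + q^2)/2; consequently |G| ≥ (q^5 − 2q^3 + q^2)/2. -/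
/-- Tuples `(i, j, k, m, n₁, …, n_{q-2})` of nonnegative integers; the coordinate
`n : Fin (q-2) → ℕ` encodes `n_s` via `n_s = n ⟨s-1, _⟩`, i.e. index `t : Fin (q-2)`
corresponds to the paper's index `s = t + 1`. -/
abbrev GKTup (q : ℕ) := ℕ × ℕ × ℕ × ℕ × (Fin (q - 2) → ℕ)

/-- `φ(i,j,k,m,n₁,…,n_{q-2}) = i q^3 + j + k q + m (q^2+1) + Σ_{s=1}^{q-2} n_s (s+1) q^2 + 1`. -/
def gkPhi (q : ℕ) (t : GKTup q) : ℕ :=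
  t.1 * q ^ 3 + t.2.1 + t.2.2.1 * q + t.2.2.2.1 * (q ^ 2 + 1) +
    (∑ s : Fin (q - 2), t.2.2.2.2 s * ((s.1 + 2) * q ^ 2)) + 1

/-- The weight `i + j + k + m q + Σ_{s=1}^{q-2} n_s ((s+1) q - s)`. -/
def gkWt (q : ℕ) (t : GKTup q) : ℕ :=
  t.1 + t.2.1 + t.2.2.1 + t.2.2.2.1 * q +
    ∑ s : Fin (q - 2), t.2.2.2.2 s * ((s.1 + 2) * q - (s.1 + 1))

/-- The set `𝒢` of tuples with `j ≤ q - 1` and weight at most `q^2 - 2`. -/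
def gkCalG (q : ℕ) : Set (GKTup q) :=
  {t | t.2.1 ≤ q - 1 ∧ gkWt q t ≤ q ^ 2 - 2}

/-- The set of gaps `G = φ(𝒢)`. -/
def gkG (q : ℕ) : Set ℕ := gkPhi q '' gkCalG q

/-- `𝒢₁`: tuples in `𝒢` with `j = 0` and all `n_s = 0`. -/
def gkCalG1 (q : ℕ) : Set (GKTup q) :=
  {t | t ∈ gkCalG q ∧ t.2.1 = 0 ∧ ∀ s, t.2.2.2.2 s = 0}

/-- `𝒢₂`: tuples in `𝒢` with `1 ≤ j ≤ q - 1`, `k ≤ q - 1`, `j + m ≤ q - 1` and all `n_s = 0`. -/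
def gkCalG2 (q : ℕ) : Set (GKTup q) :=
  {t | t ∈ gkCalG q ∧ 1 ≤ t.2.1 ∧ t.2.1 ≤ q - 1 ∧ t.2.2.1 ≤ q - 1 ∧
    t.2.1 + t.2.2.2.1 ≤ q - 1 ∧ ∀ s, t.2.2.2.2 s = 0}

/-- `𝒢₃`: tuples in `𝒢` with `m = 0`, `k ≤ q - 1`, exactly one `n_s = 1` (the other `n`'s
being zero) and `i + k + (s+1) q ≥ q^2 - 1`. -/
def gkCalG3 (q : ℕ) : Set (GKTup q) :=
  {t | t ∈ gkCalG q ∧ t.2.2.2.1 = 0 ∧ t.2.2.1 ≤ q - 1 ∧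
    ∃ s : Fin (q - 2), t.2.2.2.2 s = 1 ∧ (∀ s', s' ≠ s → t.2.2.2.2 s' = 0) ∧
      q ^ 2 - 1 ≤ t.1 + t.2.2.1 + (s.1 + 2) * q}

/-!
Write `r = j + m` and `B = k + (m + Σ_s n_s (s+1)) q`, so that `φ(t) = 1 + r + B q + i q³`.
On `𝒢₁ ∪ 𝒢₂ ∪ 𝒢₃` one has `r < q` and `B < q²`, so `φ(t)` determines the base-`q` digits
`(r, B, i)`. These determine `t` inside each `𝒢ₗ`; `𝒢₁` and `𝒢₂` are told apart by whether
`r ≤ ⌊B / q⌋`, and `𝒢₃` is separated from `𝒢₁ ∪ 𝒢₂` by `i + B`, which is at least `q² - 1` on `𝒢₃`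
and at most `q² - 2` elsewhere. Hence `φ` is injective on the union, and its size is
`|𝒢₁| + |𝒢₂| + |𝒢₃| = q²(q-1)(q+1)(2q+3)/12 + q²(q-1)(q+1)(4q-5)/12 + q²(q-1)(q-2)/6`,
each count being a sum of quadratic polynomials over the fibres of an explicit parametrisation.
-/

open Finset

theorem Nat.eq_and_eq_of_add_mul_eq_add_mul {b r r' x x' : ℕ} (hr : r < b) (hr' : r' < b)
    (h : r + x * b = r' + x' * b) : r = r' ∧ x = x' := by
  have hb : 0 < b := by omega
  have hmod := congrArg (· % b) h
  have hdiv := congrArg (· / b) h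
  simp only [Nat.add_mul_mod_self_right, Nat.mod_eq_of_lt hr, Nat.mod_eq_of_lt hr'] at hmod
  simp only [Nat.add_mul_div_right _ _ hb, Nat.div_eq_of_lt hr, Nat.div_eq_of_lt hr',
    zero_add] at hdiv
  exact ⟨hmod, hdiv⟩

theorem Nat.eq_and_eq_and_eq_of_three_digits_eq {b r r' x x' y y' : ℕ} (hr : r < b) (hr' : r' < b)
    (hx : x < b ^ 2) (hx' : x' < b ^ 2)
    (h : r + (x + y * b ^ 2) * b = r' + (x' + y' * b ^ 2) * b) : r = r' ∧ x = x' ∧ y = y' := by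
  obtain ⟨hr, hxy⟩ := Nat.eq_and_eq_of_add_mul_eq_add_mul hr hr' h
  exact ⟨hr, Nat.eq_and_eq_of_add_mul_eq_add_mul hx hx' hxy⟩

section

variable {q : ℕ}

theorem gkPhi_zero (i j k m : ℕ) :
    gkPhi q (i, j, k, m, 0) = j + m + (k + m * q + i * q ^ 2) * q + 1 := by
  simp only [gkPhi, Pi.zero_apply, zero_mul, sum_const_zero]
  ring

theorem gkWt_zero (i j k m : ℕ) : gkWt q (i, j, k, m, 0) = i + j + k + m * q := by
  simp [gkWt]

theorem gkPhi_single (i j k : ℕ) (s : Fin (q - 2)) :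
    gkPhi q (i, j, k, 0, Pi.single s 1) = j + (k + (s + 2) * q + i * q ^ 2) * q + 1 := by
  simp only [gkPhi, Pi.single_apply, ite_mul, one_mul, zero_mul, sum_ite_eq', mem_univ, if_true]
  ring

theorem gkWt_single (i j k : ℕ) (s : Fin (q - 2)) :
    gkWt q (i, j, k, 0, Pi.single s 1) = i + j + k + ((s + 2) * q - (s + 1)) := by
  simp only [gkWt, Pi.single_apply, ite_mul, one_mul, zero_mul, sum_ite_eq', mem_univ, if_true]
  ring

theorem mem_gkCalG1 {t : GKTup q} :
    t ∈ gkCalG1 q ↔ ∃ i k m, t = (i, 0, k, m, 0) ∧ i + k + m * q ≤ q ^ 2 - 2 := by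
  constructor
  · rintro ⟨⟨-, hwt⟩, hj, hn⟩
    obtain ⟨i, j, k, m, n⟩ := t
    obtain rfl : n = 0 := funext hn
    obtain rfl : j = 0 := hj
    exact ⟨i, k, m, rfl, by simpa [gkWt_zero] using hwt⟩
  · rintro ⟨i, k, m, rfl, hwt⟩
    exact ⟨⟨Nat.zero_le _, by simpa [gkWt_zero] using hwt⟩, rfl, fun _ => rfl⟩

theorem mem_gkCalG2 {t : GKTup q} :
    t ∈ gkCalG2 q ↔ ∃ i j k m, t = (i, j, k, m, 0) ∧ 0 < j ∧ k < q ∧ j + m < q ∧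
      i + j + k + m * q ≤ q ^ 2 - 2 := by
  obtain ⟨i, j, k, m, n⟩ := t
  constructor
  · rintro ⟨⟨-, hwt⟩, hj, -, hk, hjm, hn⟩
    obtain rfl : n = 0 := funext hn
    dsimp only at hj hk hjm
    exact ⟨i, j, k, m, rfl, hj, by omega, by omega, by simpa [gkWt_zero] using hwt⟩
  · rintro ⟨i, j, k, m, he, hj, hk, hjm, hwt⟩
    simp only [Prod.mk.injEq] at he
    obtain ⟨rfl, rfl, rfl, rfl, rfl⟩ := he
    exact ⟨⟨by dsimp; omega, by simpa [gkWt_zero] using hwt⟩, hj, by dsimp; omega,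
      by dsimp; omega, by dsimp; omega, fun _ => rfl⟩

theorem mem_gkCalG3 {t : GKTup q} :
    t ∈ gkCalG3 q ↔ ∃ i j k, ∃ s : Fin (q - 2), t = (i, j, k, 0, Pi.single s 1) ∧ k < q ∧
      q ^ 2 - 1 ≤ i + k + (s + 2) * q ∧ i + j + k + (s + 2) * q ≤ q ^ 2 - 1 + s := by
  have bounds (s : Fin (q - 2)) : s + 1 ≤ (s + 2) * q ∧ 2 ≤ q ^ 2 := by
    have : 3 ≤ q := by have := s.isLt; omega
    constructor <;> nlinarith
  obtain ⟨i, j, k, m, n⟩ := t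
  constructor
  · rintro ⟨⟨-, hwt⟩, rfl, hk, s, hs, hn, hlow⟩
    obtain rfl : n = Pi.single s 1 := by
      funext s'
      rcases eq_or_ne s' s with rfl | h
      · simpa using hs
      · simpa [h] using hn s' h
    have := bounds s
    rw [gkWt_single] at hwt
    exact ⟨i, j, k, s, rfl, by dsimp at hk; omega, hlow, by omega⟩
  · rintro ⟨i, j, k, s, he, hk, hlow, hup⟩
    simp only [Prod.mk.injEq] at he
    obtain ⟨rfl, rfl, rfl, rfl, rfl⟩ := he
    have := bounds s
    have := s.isLt
    refine ⟨⟨by dsimp; omega, by rw [gkWt_single]; omega⟩, rfl, by dsimp; omega, s, by simp,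
      fun s' h => by simp [h], hlow⟩

theorem add_two_mul_add_le_sq (s : Fin (q - 2)) : (s + 2) * q + q ≤ q ^ 2 := by
  have : (s : ℕ) + 3 ≤ q := by have := s.isLt; omega
  nlinarith

theorem gkCalG1_disjoint_gkCalG2 : Disjoint (gkCalG1 q) (gkCalG2 q) :=
  Set.disjoint_left.2 fun _ ⟨_, hj, _⟩ ⟨_, hj', _⟩ => by omega

theorem gkCalG1_union_gkCalG2_disjoint_gkCalG3 : Disjoint (gkCalG1 q ∪ gkCalG2 q) (gkCalG3 q) := by
  refine Set.disjoint_left.2 fun t ht ⟨_, _, _, s, hs, _⟩ => ?_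
  obtain ⟨_, _, hn⟩ | ⟨_, _, _, _, _, hn⟩ := ht <;> simp [hn s] at hs

theorem lt_of_add_mul_le_sq_sub_two (hq : 2 ≤ q) {a m : ℕ} (h : a + m * q ≤ q ^ 2 - 2) :
    m < q :=
  Nat.lt_of_mul_lt_mul_right (a := q) <| by
    have := Nat.pow_le_pow_left hq 2
    rw [← sq]; omega

theorem eq_of_gkPhi_zero_eq_gkPhi_zero (hq : 2 ≤ q) {i j k m i' j' k' m' : ℕ}
    (hr : j + m < q) (hr' : j' + m' < q) (hw : k + m * q ≤ q ^ 2 - 2)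
    (hw' : k' + m' * q ≤ q ^ 2 - 2) (h : gkPhi q (i, j, k, m, 0) = gkPhi q (i', j', k', m', 0)) :
    j + m = j' + m' ∧ k + m * q = k' + m' * q ∧ i = i' := by
  rw [gkPhi_zero, gkPhi_zero] at h
  have := Nat.pow_le_pow_left hq 2
  exact Nat.eq_and_eq_and_eq_of_three_digits_eq hr hr' (by omega) (by omega)
    (Nat.add_right_cancel h)

theorem gkPhi_injOn_gkCalG1_union_gkCalG2 (hq : 2 ≤ q) :
    Set.InjOn (gkPhi q) (gkCalG1 q ∪ gkCalG2 q) := by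
  rw [Set.injOn_union gkCalG1_disjoint_gkCalG2]
  refine ⟨?_, ?_, ?_⟩
  · intro t ht t' ht' h
    obtain ⟨i, k, m, rfl, hw⟩ := mem_gkCalG1.1 ht
    obtain ⟨i', k', m', rfl, hw'⟩ := mem_gkCalG1.1 ht'
    obtain ⟨hm, hkm, rfl⟩ := eq_of_gkPhi_zero_eq_gkPhi_zero hq
      (by simpa using lt_of_add_mul_le_sq_sub_two hq hw)
      (by simpa using lt_of_add_mul_le_sq_sub_two hq hw') (by omega) (by omega) h
    obtain rfl : m = m' := by simpa using hm
    obtain rfl : k = k' := by simpa using hkm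
    rfl
  · intro t ht t' ht' h
    obtain ⟨i, j, k, m, rfl, -, hk, hjm, hw⟩ := mem_gkCalG2.1 ht
    obtain ⟨i', j', k', m', rfl, -, hk', hjm', hw'⟩ := mem_gkCalG2.1 ht'
    obtain ⟨hjm, hkm, rfl⟩ :=
      eq_of_gkPhi_zero_eq_gkPhi_zero hq hjm hjm' (by omega) (by omega) h
    obtain ⟨rfl, rfl⟩ := Nat.eq_and_eq_of_add_mul_eq_add_mul hk hk' hkm
    obtain rfl : j = j' := by omega
    rfl
  · intro t ht t' ht' h
    obtain ⟨i, k, m, rfl, hw⟩ := mem_gkCalG1.1 ht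
    obtain ⟨i', j', k', m', rfl, hj', hk', hjm', hw'⟩ := mem_gkCalG2.1 ht'
    obtain ⟨hm, hkm, -⟩ := eq_of_gkPhi_zero_eq_gkPhi_zero hq
      (by simpa using lt_of_add_mul_le_sq_sub_two hq hw) hjm' (by omega) (by omega) h
    have : (m' + 1) * q ≤ m * q := Nat.mul_le_mul_right q (by omega)
    rw [add_one_mul] at this
    omega

theorem gkPhi_injOn_gkCalG3 : Set.InjOn (gkPhi q) (gkCalG3 q) := by
  intro t ht t' ht' h
  obtain ⟨i, j, k, s, rfl, hk, hlo, hup⟩ := mem_gkCalG3.1 ht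
  obtain ⟨i', j', k', s', rfl, hk', hlo', hup'⟩ := mem_gkCalG3.1 ht'
  rw [gkPhi_single, gkPhi_single] at h
  have := add_two_mul_add_le_sq s
  have := add_two_mul_add_le_sq s'
  obtain ⟨rfl, hks, rfl⟩ := Nat.eq_and_eq_and_eq_of_three_digits_eq (by omega) (by omega) (by omega)
    (by omega) (Nat.add_right_cancel h)
  obtain ⟨rfl, hs⟩ := Nat.eq_and_eq_of_add_mul_eq_add_mul hk hk' hks
  obtain rfl : s = s' := Fin.ext (by omega)
  rfl

theorem gkPhi_ne_of_mem_gkCalG1_union_gkCalG2_of_mem_gkCalG3 (hq : 2 ≤ q) {t t' : GKTup q}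
    (ht : t ∈ gkCalG1 q ∪ gkCalG2 q) (ht' : t' ∈ gkCalG3 q) : gkPhi q t ≠ gkPhi q t' := by
  obtain ⟨i, j, k, m, rfl, hjm, hw⟩ : ∃ i j k m, t = (i, j, k, m, 0) ∧ j + m < q ∧
      i + k + m * q ≤ q ^ 2 - 2 := by
    rcases ht with ht | ht
    · obtain ⟨i, k, m, rfl, hw⟩ := mem_gkCalG1.1 ht
      exact ⟨i, 0, k, m, rfl, by simpa using lt_of_add_mul_le_sq_sub_two hq hw, hw⟩
    · obtain ⟨i, j, k, m, rfl, -, -, hjm, hw⟩ := mem_gkCalG2.1 ht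
      exact ⟨i, j, k, m, rfl, hjm, by omega⟩
  obtain ⟨i', j', k', s, rfl, hk', hlo, hup⟩ := mem_gkCalG3.1 ht'
  intro h
  rw [gkPhi_zero, gkPhi_single] at h
  have := add_two_mul_add_le_sq s
  have := Nat.pow_le_pow_left hq 2
  obtain ⟨-, hB, rfl⟩ := Nat.eq_and_eq_and_eq_of_three_digits_eq hjm (by omega) (by omega)
    (by omega) (Nat.add_right_cancel h)
  omega

theorem gkPhi_injOn (hq : 2 ≤ q) : Set.InjOn (gkPhi q) (gkCalG1 q ∪ gkCalG2 q ∪ gkCalG3 q) :=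
  (Set.injOn_union gkCalG1_union_gkCalG2_disjoint_gkCalG3).2
    ⟨gkPhi_injOn_gkCalG1_union_gkCalG2 hq, gkPhi_injOn_gkCalG3,
      fun _ ht _ ht' => gkPhi_ne_of_mem_gkCalG1_union_gkCalG2_of_mem_gkCalG3 hq ht ht'⟩

theorem two_mul_sum_range_tsub {n c : ℕ} (h : n ≤ c + 1) :
    2 * ((∑ k ∈ range n, (c - k) : ℕ) : ℤ) = n * (2 * c + 1 - n) := by
  induction n with
  | zero => simp
  | succ n ih =>
    rw [sum_range_succ, Nat.cast_add, Nat.cast_sub (by omega), mul_add, ih (by omega)]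
    push_cast
    ring

theorem six_mul_sum_range_of_quadratic {f : ℕ → ℤ} (a b c : ℤ) {n : ℕ}
    (hf : ∀ j < n, f j = a + b * j + c * j ^ 2) :
    6 * ∑ j ∈ range n, f j = n * (6 * a + 3 * b * (n - 1) + c * (n - 1) * (2 * n - 1)) := by
  induction n with
  | zero => simp
  | succ n ih =>
    rw [sum_range_succ, mul_add, ih fun j hj => hf j (by omega), hf n (by omega)]
    push_cast
    ring

def gkParam1 (q : ℕ) : Finset (Σ _ : ℕ, Σ _ : ℕ, ℕ) :=
  (range q).sigma fun m => (range (q ^ 2 - 1 - m * q)).sigma fun k => range (q ^ 2 - 1 - m * q - k)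

theorem gkCalG1_eq_image (hq : 2 ≤ q) :
    gkCalG1 q =
      (fun x : Σ _ : ℕ, Σ _ : ℕ, ℕ => ((x.2.2, 0, x.2.1, x.1, 0) : GKTup q)) '' gkParam1 q := by
  have := Nat.pow_le_pow_left hq 2
  ext t
  simp only [mem_gkCalG1, gkParam1, Set.mem_image, coe_sigma, Set.mem_sigma_iff, coe_range,
    Set.mem_Iio, Sigma.exists]
  constructor
  · rintro ⟨i, k, m, rfl, hw⟩
    exact ⟨m, k, i, ⟨lt_of_add_mul_le_sq_sub_two hq hw, by omega, by omega⟩, rfl⟩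
  · rintro ⟨m, k, i, ⟨-, hk, hi⟩, rfl⟩
    exact ⟨i, k, m, rfl, by omega⟩

theorem ncard_gkCalG1 (hq : 2 ≤ q) :
    12 * ((gkCalG1 q).ncard : ℤ) = q ^ 2 * (q - 1) * (q + 1) * (2 * q + 3) := by
  have hcard : 2 * ((gkCalG1 q).ncard : ℤ) =
      ∑ m ∈ range q, ((q ^ 2 - 1 - m * q) * (q ^ 2 - m * q) : ℤ) := by
    rw [gkCalG1_eq_image hq, Set.ncard_image_of_injective, Set.ncard_coe_finset]
    · simp only [gkParam1, card_sigma, card_range]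
      rw [Nat.cast_sum, mul_sum]
      refine sum_congr rfl fun m hm => ?_
      have : m * q + 1 ≤ q ^ 2 := by rw [mem_range] at hm; nlinarith
      have hN : ((q ^ 2 - 1 - m * q : ℕ) : ℤ) = q ^ 2 - 1 - m * q := by
        rw [Nat.sub_sub, Nat.cast_sub (by omega)]; push_cast; ring
      rw [two_mul_sum_range_tsub (Nat.le_succ _), hN]
      ring
    · rintro ⟨m, k, i⟩ ⟨m', k', i'⟩ h
      simp only [Prod.mk.injEq] at h
      obtain ⟨rfl, -, rfl, rfl, -⟩ := h
      rfl
  rw [show (12 : ℤ) = 6 * 2 by norm_num, mul_assoc, hcard,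
    six_mul_sum_range_of_quadratic (q ^ 4 - q ^ 2) (q - 2 * q ^ 3) (q ^ 2) fun m _ => by ring]
  ring

def gkParam2 (q : ℕ) : Finset (Σ _ : ℕ, Σ _ : ℕ, Σ _ : ℕ, ℕ) :=
  (range (q - 1)).sigma fun j => (range (q - 1 - j)).sigma fun m =>
    (range q).sigma fun k => range (q ^ 2 - 2 - j - m * q - k)

theorem gkCalG2_eq_image :
    gkCalG2 q = (fun x : Σ _ : ℕ, Σ _ : ℕ, Σ _ : ℕ, ℕ =>
      ((x.2.2.2, x.1 + 1, x.2.2.1, x.2.1, 0) : GKTup q)) '' gkParam2 q := by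
  ext t
  simp only [mem_gkCalG2, gkParam2, Set.mem_image, coe_sigma, Set.mem_sigma_iff, coe_range,
    Set.mem_Iio, Sigma.exists]
  constructor
  · rintro ⟨i, j, k, m, rfl, hj, hk, hjm, hw⟩
    refine ⟨j - 1, m, k, i, ⟨by omega, by omega, hk, by omega⟩, ?_⟩
    rw [Nat.sub_add_cancel hj]
  · rintro ⟨j, m, k, i, ⟨-, hm, hk, hi⟩, rfl⟩
    exact ⟨i, j + 1, k, m, rfl, by omega, hk, by omega, by omega⟩

theorem ncard_gkCalG2 (hq : 2 ≤ q) :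
    12 * ((gkCalG2 q).ncard : ℤ) = q ^ 2 * (q - 1) * (q + 1) * (4 * q - 5) := by
  have hk {j m : ℕ} (hjm : j + m + 2 ≤ q) :
      2 * ((∑ k ∈ range q, (q ^ 2 - 2 - j - m * q - k) : ℕ) : ℤ) =
        q * (2 * q ^ 2 - q - 3 - 2 * j) - 2 * q ^ 2 * m := by
    have : (j + m + 2) * q ≤ q ^ 2 := by nlinarith
    have : j ≤ j * q := Nat.le_mul_of_pos_right j (by omega)
    have hc : ((q ^ 2 - 2 - j - m * q : ℕ) : ℤ) = q ^ 2 - 2 - j - m * q := by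
      rw [Nat.sub_sub, Nat.sub_sub, Nat.cast_sub (by nlinarith)]; push_cast; ring
    rw [two_mul_sum_range_tsub (by nlinarith), hc]
    ring
  have hm {j : ℕ} (hj : j < q - 1) :
      12 * ((∑ m ∈ range (q - 1 - j), ∑ k ∈ range q, (q ^ 2 - 2 - j - m * q - k) : ℕ) : ℤ) =
        (q - 1 - j) * (6 * q * (q ^ 2 + q - 3) + 6 * q * (q - 2) * j) := by
    rw [Nat.cast_sum, show (12 : ℤ) = 6 * 2 by norm_num, mul_assoc, mul_sum,
      six_mul_sum_range_of_quadratic (q * (2 * q ^ 2 - q - 3 - 2 * j)) (-2 * q ^ 2) 0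
        fun m hm => by rw [hk (by omega)]; ring]
    rw [show ((q - 1 - j : ℕ) : ℤ) = q - 1 - j by omega]
    ring
  have hcard : 12 * ((gkCalG2 q).ncard : ℤ) =
      ∑ j ∈ range (q - 1), ((q : ℤ) - 1 - j) * (6 * q * (q ^ 2 + q - 3) + 6 * q * (q - 2) * j) := by
    rw [gkCalG2_eq_image, Set.ncard_image_of_injective, Set.ncard_coe_finset]
    · simp only [gkParam2, card_sigma, card_range]
      rw [Nat.cast_sum, mul_sum]
      exact sum_congr rfl fun j hj => hm (mem_range.1 hj)
    · rintro ⟨j, m, k, i⟩ ⟨j', m', k', i'⟩ h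
      simp only [Prod.mk.injEq, add_left_inj] at h
      obtain ⟨rfl, rfl, rfl, rfl, -⟩ := h
      rfl
  refine mul_left_cancel₀ (by norm_num : (6 : ℤ) ≠ 0) ?_
  rw [hcard, six_mul_sum_range_of_quadratic ((q - 1) * 6 * q * (q ^ 2 + q - 3))
      (6 * q * ((q - 1) * (q - 2) - (q ^ 2 + q - 3))) (-6 * q * (q - 2)) fun j _ => by ring,
    show ((q - 1 : ℕ) : ℤ) = q - 1 by omega]
  ring

def gkParam3 (q : ℕ) : Finset (Σ _ : Fin (q - 2), Σ _ : ℕ, Σ _ : ℕ, ℕ) :=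
  univ.sigma fun s => (range (s + 1)).sigma fun j => (range q).sigma fun k =>
    Ico (q ^ 2 - 1 - (s + 2) * q - k) (q ^ 2 - 1 - (s + 2) * q - k + (s + 1 - j))

theorem gkCalG3_eq_image :
    gkCalG3 q = (fun x : Σ _ : Fin (q - 2), Σ _ : ℕ, Σ _ : ℕ, ℕ =>
      ((x.2.2.2, x.2.1, x.2.2.1, 0, Pi.single x.1 1) : GKTup q)) '' gkParam3 q := by
  ext t
  simp only [mem_gkCalG3, gkParam3, Set.mem_image, coe_sigma, Set.mem_sigma_iff, coe_univ,
    Set.mem_univ, coe_range, Set.mem_Iio, coe_Ico, Set.mem_Ico, true_and, Sigma.exists]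
  constructor
  · rintro ⟨i, j, k, s, rfl, hk, hlo, hup⟩
    have := add_two_mul_add_le_sq s
    exact ⟨s, j, k, i, ⟨by omega, hk, by omega, by omega⟩, rfl⟩
  · rintro ⟨s, j, k, i, ⟨hj, hk, hlo, hup⟩, rfl⟩
    have := add_two_mul_add_le_sq s
    exact ⟨i, j, k, s, rfl, hk, by omega, by omega⟩

theorem ncard_gkCalG3 (hq : 2 ≤ q) :
    12 * ((gkCalG3 q).ncard : ℤ) = 2 * q ^ 2 * (q - 1) * (q - 2) := by
  have hcard : 12 * ((gkCalG3 q).ncard : ℤ) =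
      6 * ∑ s ∈ range (q - 2), ((2 * q : ℤ) + 3 * q * s + q * s ^ 2) := by
    rw [gkCalG3_eq_image, Set.ncard_image_of_injective, Set.ncard_coe_finset]
    · simp only [gkParam3, card_sigma, card_range, Nat.card_Ico, add_tsub_cancel_left, sum_const,
        smul_eq_mul]
      rw [Fin.sum_univ_eq_sum_range (fun s => ∑ j ∈ range (s + 1), q * (s + 1 - j)), Nat.cast_sum,
        show (12 : ℤ) = 6 * 2 by norm_num, mul_assoc, mul_sum]
      congr 1
      refine sum_congr rfl fun s _ => ?_
      rw [← mul_sum, Nat.cast_mul, mul_left_comm, two_mul_sum_range_tsub (Nat.le_succ _)]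
      push_cast
      ring
    · rintro ⟨s, j, k, i⟩ ⟨s', j', k', i'⟩ h
      simp only [Prod.mk.injEq] at h
      obtain ⟨rfl, rfl, rfl, -, hs⟩ := h
      obtain rfl : s = s' := by simpa [Pi.single_apply] using congrFun hs s
      rfl
  rw [hcard, six_mul_sum_range_of_quadratic _ _ _ fun s _ => rfl,
    show ((q - 2 : ℕ) : ℤ) = q - 2 by omega]
  ring

theorem gkCalG1_union_gkCalG2_union_gkCalG3_subset :
    gkCalG1 q ∪ gkCalG2 q ∪ gkCalG3 q ⊆ gkCalG q :=
  Set.union_subset (Set.union_subset (fun _ ht => ht.1) fun _ ht => ht.1) fun _ ht => ht.1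

theorem gkCalG_finite (hq : 0 < q) : (gkCalG q).Finite := by
  classical
  refine (Set.finite_Icc 0 ((q ^ 2, q ^ 2, q ^ 2, q ^ 2, fun _ => q ^ 2) : GKTup q)).subset ?_
  rintro ⟨i, j, k, m, n⟩ ⟨-, hwt⟩
  have hm : m ≤ m * q := Nat.le_mul_of_pos_right m hq
  have hn (s : Fin (q - 2)) : n s ≤ ∑ s, n s * ((s + 2) * q - (s + 1)) :=
    calc n s ≤ n s * ((s + 2) * q - (s + 1)) :=
          Nat.le_mul_of_pos_right _ (by have := Nat.mul_le_mul_left (s + 2) hq; omega)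
      _ ≤ _ := single_le_sum (f := fun s => n s * ((s + 2) * q - (s + 1)))
          (fun _ _ => Nat.zero_le _) (mem_univ s)
  simp only [gkWt] at hwt
  simp only [Set.mem_Icc, zero_le, true_and, Prod.le_def, Pi.le_def]
  exact ⟨by omega, by omega, by omega, by omega, fun s => by have := hn s; omega⟩

theorem ncard_gkCalG1_union_gkCalG2_union_gkCalG3 (hq : 2 ≤ q) :
    (gkCalG1 q ∪ gkCalG2 q ∪ gkCalG3 q).ncard = (q ^ 5 - 2 * q ^ 3 + q ^ 2) / 2 := by
  have hfin : (gkCalG1 q ∪ gkCalG2 q ∪ gkCalG3 q).Finite :=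
    (gkCalG_finite (by omega)).subset gkCalG1_union_gkCalG2_union_gkCalG3_subset
  rw [Set.ncard_union_eq gkCalG1_union_gkCalG2_disjoint_gkCalG3
      (hfin.subset Set.subset_union_left) (hfin.subset Set.subset_union_right),
    Set.ncard_union_eq gkCalG1_disjoint_gkCalG2
      (hfin.subset (Set.subset_union_left.trans Set.subset_union_left))
      (hfin.subset (Set.subset_union_right.trans Set.subset_union_left))]
  have h53 : 2 * q ^ 3 ≤ q ^ 5 := by
    have := Nat.pow_le_pow_left hq 2
    calc 2 * q ^ 3 ≤ q ^ 2 * q ^ 3 := by gcongr; omega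
      _ = q ^ 5 := by ring
  refine (Nat.div_eq_of_eq_mul_left two_pos ?_).symm
  zify [h53]
  linarith [ncard_gkCalG1 hq, ncard_gkCalG2 hq, ncard_gkCalG3 hq]

end

/-- `G₁ ∪ G₂ ∪ G₃ ⊆ G`, the union has cardinality exactly `(q^5 - 2q^3 + q^2)/2`, and
consequently `|G| ≥ (q^5 - 2q^3 + q^2)/2`. -/
theorem gk_union_card (q : ℕ) (hq : IsPrimePow q) :
    (gkPhi q '' gkCalG1 q) ∪ (gkPhi q '' gkCalG2 q) ∪ (gkPhi q '' gkCalG3 q) ⊆ gkG q ∧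
    ((gkPhi q '' gkCalG1 q) ∪ (gkPhi q '' gkCalG2 q) ∪ (gkPhi q '' gkCalG3 q)).ncard
      = (q ^ 5 - 2 * q ^ 3 + q ^ 2) / 2 ∧
    (q ^ 5 - 2 * q ^ 3 + q ^ 2) / 2 ≤ (gkG q).ncard := by
  have hq2 := hq.two_le
  have hsub : gkPhi q '' (gkCalG1 q ∪ gkCalG2 q ∪ gkCalG3 q) ⊆ gkG q :=
    Set.image_mono gkCalG1_union_gkCalG2_union_gkCalG3_subset
  have hcard : (gkPhi q '' (gkCalG1 q ∪ gkCalG2 q ∪ gkCalG3 q)).ncard =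
      (q ^ 5 - 2 * q ^ 3 + q ^ 2) / 2 := by
    rw [(gkPhi_injOn hq2).ncard_image, ncard_gkCalG1_union_gkCalG2_union_gkCalG3 hq2]
  simp only [← Set.image_union]
  exact ⟨hsub, hcard, hcard ▸ Set.ncard_le_ncard hsub ((gkCalG_finite (by omega)).image _)⟩
end
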